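/- (Claim 2) Let x, y, z : ℕ → ℤ → F₂ be families of F₂-valued sequences with x̃_i(t) = Σ_{τ=0}^{i-1} x_{i-τ}(t-τ) and ỹ, z̃ defined analogously. Fix integers t, δx, δy, δz and natural numbers i, j, k with i, j, k ≥ 1. Define Q_x(s) = x̃_i(s-δx), Q_y(s) = ỹ_j(s-δy), Q_z(s) = z̃_k(s-δz), B_y(s) = ỹ_j(s-δy+1), B_z(s) = z̃_{k-1}(s-δz), C(s) = x̃_i(s-δx-1) + ỹ_{j+1}(s-δy) + z̃_{k-1}(s-δz+1), D(s) = x̃_{i-1}(s-δx) + ỹ_{j+1}(s-δy-1) + z̃_k(s-δz+1), and E_x(s) = x̃_{i-1}(s-δx+1). Then the following three identities hold: (i) Q_x(t+1) = x_i(t+1-δx) + E_x(t-1); (ii) Q_y(t+1) = B_y(t); (iii) Q_z(t+1) = B_z(t) + C(t-1) + D(t) + E_x(t-1) + Q_x(t-2). -/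

import Mathlib

/-!
Peeling off the newest summand gives the recursion `x̃_{n+1}(t) = x_{n+1}(t) + x̃_n(t-1)`,
which is identity (i). In (iii) the `x`- and `y`-terms and the two copies of `z̃_{k-1}(t-δz)`
cancel in pairs over `F₂`, leaving `z̃_k(t+1-δz)` from `D(t)`.
-/

/-- Coded symbol `x̃_i(t) = Σ_{τ=0}^{i-1} x_{i-τ}(t-τ)`; in particular `x̃_0(t) = 0`. -/
def tilde (x : ℕ → ℤ → ZMod 2) (i : ℕ) (t : ℤ) : ZMod 2 :=
  ∑ τ ∈ Finset.range i, x (i - τ) (t - (τ : ℤ))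

theorem tilde_succ (x : ℕ → ℤ → ZMod 2) (n : ℕ) (t : ℤ) :
    tilde x (n + 1) t = x (n + 1) t + tilde x n (t - 1) := by
  rw [tilde, Finset.sum_range_succ', add_comm]
  congr 1
  · simp
  · refine Finset.sum_congr rfl fun τ _ => ?_
    rw [Nat.add_sub_add_right]
    push_cast
    ring_nf

theorem edge_node_update_general (x y z : ℕ → ℤ → ZMod 2) (t δx δy δz : ℤ) (i j k : ℕ)
    (hi : 1 ≤ i)
    (Qx Qy Qz By Bz C D Ex : ℤ → ZMod 2)
    (hQx : ∀ s, Qx s = tilde x i (s - δx))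
    (hQy : ∀ s, Qy s = tilde y j (s - δy))
    (hQz : ∀ s, Qz s = tilde z k (s - δz))
    (hBy : ∀ s, By s = tilde y j (s - δy + 1))
    (hBz : ∀ s, Bz s = tilde z (k - 1) (s - δz))
    (hC : ∀ s, C s =
      tilde x i (s - δx - 1) + tilde y (j + 1) (s - δy) + tilde z (k - 1) (s - δz + 1))
    (hD : ∀ s, D s =
      tilde x (i - 1) (s - δx) + tilde y (j + 1) (s - δy - 1) + tilde z k (s - δz + 1))
    (hEx : ∀ s, Ex s = tilde x (i - 1) (s - δx + 1)) :
    Qx (t + 1) = x i (t + 1 - δx) + Ex (t - 1) ∧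
    Qy (t + 1) = By t ∧
    Qz (t + 1) = Bz t + C (t - 1) + D t + Ex (t - 1) + Qx (t - 2) := by
  obtain ⟨n, rfl⟩ := Nat.exists_eq_add_of_le' hi
  refine ⟨?_, ?_, ?_⟩
  · rw [hQx, hEx, tilde_succ, Nat.add_sub_cancel]
    congr 2
    ring
  · rw [hQy, hBy, sub_add_eq_add_sub]
  · rw [hQz, hBz, hC, hD, hEx, hQx]
    grind

/-- Claim 2: a node `Q` on the left edge of the network can compute its three
transmitted components `Q_x(t+1)`, `Q_y(t+1)`, `Q_z(t+1)` from its own source symbol,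
its own past transmission and the transmissions of its neighbours `B[Q]`, `C[Q]`,
`D[Q]`, `E[Q]`. -/
theorem edge_node_update (x y z : ℕ → ℤ → ZMod 2) (t δx δy δz : ℤ) (i j k : ℕ)
    (hi : 1 ≤ i) (hj : 1 ≤ j) (hk : 1 ≤ k)
    (Qx Qy Qz By Bz C D Ex : ℤ → ZMod 2)
    (hQx : ∀ s, Qx s = tilde x i (s - δx))
    (hQy : ∀ s, Qy s = tilde y j (s - δy))
    (hQz : ∀ s, Qz s = tilde z k (s - δz))
    (hBy : ∀ s, By s = tilde y j (s - δy + 1))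
    (hBz : ∀ s, Bz s = tilde z (k - 1) (s - δz))
    (hC : ∀ s, C s =
      tilde x i (s - δx - 1) + tilde y (j + 1) (s - δy) + tilde z (k - 1) (s - δz + 1))
    (hD : ∀ s, D s =
      tilde x (i - 1) (s - δx) + tilde y (j + 1) (s - δy - 1) + tilde z k (s - δz + 1))
    (hEx : ∀ s, Ex s = tilde x (i - 1) (s - δx + 1)) :
    Qx (t + 1) = x i (t + 1 - δx) + Ex (t - 1) ∧
    Qy (t + 1) = By t ∧
    Qz (t + 1) = Bz t + C (t - 1) + D t + Ex (t - 1) + Qx (t - 2) :=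
  edge_node_update_general x y z t δx δy δz i j k hi Qx Qy Qz By Bz C D Ex hQx hQy hQz hBy hBz hC hD
    hEx
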